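/- For every integer k ≥ 1, if ρ^{k+1} ≤ ε < ρ^k, then the closed ε-neighborhood S_ε has exactly 1 + Σ_{j=1}^{k} ℓ^j connected components. -/

import Mathlib

open Metric Set Finset

/-- The partial sums `X_k = Σ_{i=1}^{k} 2·ℓ^i·ρ^i` (with `X_0 = 0`). -/
noncomputable def gapX (ρ : ℝ) (ℓ : ℕ) (k : ℕ) : ℝ :=
  ∑ i ∈ Finset.Icc 1 k, 2 * (ℓ : ℝ) ^ i * ρ ^ i

/-- The set of points on the real line whose consecutive gaps consist, for each
`k ≥ 1`, of `ℓ^k` gaps of length `2ρ^k`: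
`S = {X_{k−1} + 2·j·ρ^k : k ≥ 1, 0 ≤ j ≤ ℓ^k}`. -/
noncomputable def gapSet (ρ : ℝ) (ℓ : ℕ) : Set ℝ :=
  {x : ℝ | ∃ k : ℕ, ∃ j : ℕ, j ≤ ℓ ^ (k + 1) ∧
    x = gapX ρ ℓ k + 2 * (j : ℝ) * ρ ^ (k + 1)}

/-!
For `ρ^{k+1} ≤ ε < ρ^k`, the gaps of `S` lying below `X_k` have length at least `2ρ^k > 2ε`,
while those above `X_k` have length at most `2ρ^{k+1} ≤ 2ε`. Hence `S_ε` splits into the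
intervals `[c - ε, c + ε]` around the points `c < X_k` of `S`, of which there are
`Σ_{j=1}^{k} ℓ^j`, and a single tail component `S_ε ∩ [X_k - ε, ∞)`. A set of reals that is
covered by order-connected pieces, each separated from the rest of the set by points outside
it, has exactly these pieces as connected components.
-/

section ConnectedComponents

variable {α : Type*} [ConditionallyCompleteLinearOrder α] [DenselyOrdered α]
  [TopologicalSpace α] [OrderTopology α]

theorem connectedComponentIn_eq_of_ordConnected {s t : Set α} {x : α} (ht : t.OrdConnected)
    (hts : t ⊆ s) (hx : x ∈ t) (hsep : ∀ y ∈ s \ t, ∃ z ∈ uIcc x y, z ∉ s) :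
    connectedComponentIn s x = t := by
  refine Subset.antisymm (fun y hy => ?_) (ht.isPreconnected.subset_connectedComponentIn hx hts)
  by_contra hyt
  obtain ⟨z, hz, hzs⟩ := hsep y ⟨connectedComponentIn_subset _ _ hy, hyt⟩
  exact hzs <| connectedComponentIn_subset _ _ <|
    isPreconnected_connectedComponentIn.ordConnected.uIcc_subset
      (mem_connectedComponentIn (hts hx)) hy hz

theorem ncard_connectedComponentIn_eq_card {ι : Type*} {s : Set α} (t : ι → Set α)
    (ht : ∀ i, (t i).OrdConnected) (hne : ∀ i, (t i).Nonempty) (hcover : ⋃ i, t i = s)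
    (hsep : ∀ i, ∀ x ∈ t i, ∀ y ∈ s \ t i, ∃ z ∈ uIcc x y, z ∉ s) (hinj : t.Injective) :
    {C | ∃ x ∈ s, C = connectedComponentIn s x}.ncard = Nat.card ι := by
  have hts : ∀ i, t i ⊆ s := fun i => hcover ▸ subset_iUnion t i
  have hcomp : ∀ i, ∀ x ∈ t i, connectedComponentIn s x = t i := fun i x hx =>
    connectedComponentIn_eq_of_ordConnected (ht i) (hts i) hx (hsep i x hx)
  suffices {C | ∃ x ∈ s, C = connectedComponentIn s x} = range t by
    rw [this, ncard_range_of_injective hinj]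
  ext C
  constructor
  · rintro ⟨x, hx, rfl⟩
    obtain ⟨i, hi⟩ := mem_iUnion.1 (hcover.symm ▸ hx : x ∈ ⋃ i, t i)
    exact ⟨i, (hcomp i x hi).symm⟩
  · rintro ⟨i, rfl⟩
    obtain ⟨x, hx⟩ := hne i
    exact ⟨x, hts i hx, (hcomp i x hx).symm⟩

end ConnectedComponents

section Cthickening

theorem notMem_cthickening_of_forall_le_dist {X : Type*} [PseudoMetricSpace X] {s : Set X}
    {x : X} {δ r : ℝ} (hr : 0 < r) (hδr : δ < r) (h : ∀ y ∈ s, r ≤ dist x y) :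
    x ∉ cthickening δ s := by
  rw [mem_cthickening_iff, not_le]
  calc ENNReal.ofReal δ < ENNReal.ofReal r := (ENNReal.ofReal_lt_ofReal_iff hr).2 hδr
    _ ≤ infEDist x s := le_infEDist.2 fun y hy => by
      rw [edist_dist]
      exact ENNReal.ofReal_le_ofReal (h y hy)

theorem mem_cthickening_of_forall_dist_le {X : Type*} [PseudoMetricSpace X] {s : Set X}
    {x x' : X} {δ : ℝ} (h : ∀ y ∈ s, dist x y ≤ dist x' y) (hx' : x' ∈ cthickening δ s) :
    x ∈ cthickening δ s := by
  refine le_trans (le_infEDist.2 fun y hy => ?_) hx'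
  refine (infEDist_le_edist_of_mem hy).trans ?_
  rw [edist_dist, edist_dist]
  exact ENNReal.ofReal_le_ofReal (h y hy)

theorem Real.cthickening_disjoint_Ioo {s : Set ℝ} {u v δ : ℝ} (hs : Disjoint s (Ioo u v))
    (hδ : 0 ≤ δ) : Disjoint (cthickening δ s) (Ioo (u + δ) (v - δ)) := by
  refine disjoint_right.2 fun x ⟨hux, hxv⟩ => ?_
  refine notMem_cthickening_of_forall_le_dist (r := min (x - u) (v - x))
    (lt_min (by linarith) (by linarith)) (lt_min (by linarith) (by linarith)) fun y hy => ?_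
  have hy' : y ≤ u ∨ v ≤ y := by
    by_contra! h
    exact disjoint_left.1 hs hy h
  rw [Real.dist_eq]
  rcases hy' with hy' | hy'
  · exact (min_le_left _ _).trans (by rw [abs_of_nonneg (by linarith)]; linarith)
  · exact (min_le_right _ _).trans (by rw [abs_of_nonpos (by linarith)]; linarith)

theorem Real.exists_mem_uIcc_notMem_cthickening {s : Set ℝ} {u v δ x y : ℝ}
    (hs : Disjoint s (Ioo u v)) (hδ : 0 ≤ δ) (huv : u + δ < v - δ) (hy : y ∈ cthickening δ s)
    (hxy : x ≤ u + δ ∧ u + δ < y ∨ y < v - δ ∧ v - δ ≤ x) :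
    ∃ z ∈ uIcc x y, z ∉ cthickening δ s := by
  have hgap := Real.cthickening_disjoint_Ioo hs hδ
  have hy' : y ∉ Ioo (u + δ) (v - δ) := disjoint_left.1 hgap hy
  refine ⟨(u + v) / 2, ?_, disjoint_right.1 hgap ⟨by linarith, by linarith⟩⟩
  simp only [Set.mem_Ioo, not_and_or, not_lt] at hy'
  rcases hxy with ⟨hx, hy⟩ | ⟨hy, hx⟩
  · exact Icc_subset_uIcc ⟨by linarith, by rcases hy' with h | h <;> linarith⟩
  · exact Icc_subset_uIcc' ⟨by rcases hy' with h | h <;> linarith, by linarith⟩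

end Cthickening

section SparseBelowDenseAbove

variable {s : Set ℝ} {a r δ : ℝ}

theorem ordConnected_cthickening_inter_Ici (ha : a ∈ s)
    (hdense : ∀ q ∈ s, Icc a q ⊆ cthickening δ s) :
    (cthickening δ s ∩ Ici (a - δ)).OrdConnected := by
  refine ⟨fun x hx y hy z hz => ⟨?_, le_trans hx.2 hz.1⟩⟩
  have hxz : a - δ ≤ z := le_trans hx.2 hz.1
  rcases le_or_gt z a with hza | hza
  · exact mem_cthickening_of_dist_le z a δ s ha
      (by rw [Real.dist_eq, abs_le]; constructor <;> linarith)
  by_cases hq : ∃ q ∈ s, z ≤ q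
  · obtain ⟨q, hq, hzq⟩ := hq
    exact hdense q hq ⟨hza.le, hzq⟩
  -- all of `s` lies below `z ≤ y`, so `z` is at least as close to `s` as `y` is
  push Not at hq
  refine mem_cthickening_of_forall_dist_le (fun p hp => ?_) hy.1
  have hpz := hq p hp
  rw [Real.dist_eq, Real.dist_eq, abs_of_pos (by linarith), abs_of_pos (by linarith [hz.2])]
  linarith [hz.2]

theorem exists_mem_Icc_of_mem_cthickening (hfin : (s ∩ Iio a).Finite) (hδ : 0 ≤ δ) {x : ℝ}
    (hx : x ∈ cthickening δ s) (hxa : x < a - δ) :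
    ∃ c ∈ s ∩ Iio a, x ∈ Icc (c - δ) (c + δ) := by
  have hsplit : s = s ∩ Iio a ∪ s ∩ Ici a := by
    rw [← inter_union_distrib_left, Iio_union_Ici, inter_univ]
  rw [hsplit, cthickening_union, hfin.isCompact.cthickening_eq_biUnion_closedBall hδ] at hx
  rcases hx with hx | hx
  · obtain ⟨c, hc, hxc⟩ := mem_iUnion₂.1 hx
    exact ⟨c, hc, Real.closedBall_eq_Icc ▸ hxc⟩
  · refine absurd hx (notMem_cthickening_of_forall_le_dist (r := a - x) (by linarith)
      (by linarith) fun p hp => ?_)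
    have hap : a ≤ p := hp.2
    rw [Real.dist_eq, abs_sub_comm, abs_of_nonneg (by linarith)]
    linarith

theorem disjoint_Ioo_sub_of_sparse (hsparse : ∀ p ∈ s, ∀ q ∈ s, p < a → p < q → p + 2 * r ≤ q)
    {c : ℝ} (hc : c ∈ s) (hca : c ≤ a) : Disjoint s (Ioo (c - 2 * r) c) :=
  disjoint_left.2 fun p hp hpc => by
    linarith [hsparse p hp c hc (hpc.2.trans_le hca) hpc.2, hpc.1]

theorem disjoint_Ioo_add_of_sparse (hsparse : ∀ p ∈ s, ∀ q ∈ s, p < a → p < q → p + 2 * r ≤ q)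
    {c : ℝ} (hc : c ∈ s) (hca : c < a) : Disjoint s (Ioo c (c + 2 * r)) :=
  disjoint_left.2 fun q hq hcq => by linarith [hsparse c hc q hq hca hcq.1, hcq.2]

variable (s a δ) in
def cthickeningPiece : Option ↥(s ∩ Iio a) → Set ℝ
  | none => cthickening δ s ∩ Ici (a - δ)
  | some c => Icc (c - δ) (c + δ)

theorem iUnion_cthickeningPiece (hfin : (s ∩ Iio a).Finite) (hδ : 0 ≤ δ) :
    ⋃ i, cthickeningPiece s a δ i = cthickening δ s := by
  refine Subset.antisymm (iUnion_subset ?_) fun x hx => ?_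
  · rintro (_ | ⟨c, hc, -⟩)
    · exact inter_subset_left
    · rw [cthickeningPiece, ← Real.closedBall_eq_Icc]
      exact closedBall_subset_cthickening hc δ
  rcases le_or_gt (a - δ) x with hxa | hxa
  · exact mem_iUnion.2 ⟨none, hx, hxa⟩
  · obtain ⟨c, hc, hxc⟩ := exists_mem_Icc_of_mem_cthickening hfin hδ hx hxa
    exact mem_iUnion.2 ⟨some ⟨c, hc⟩, hxc⟩

theorem cthickeningPiece_separated (ha : a ∈ s) (hδ : 0 ≤ δ) (hδr : δ < r)
    (hsparse : ∀ p ∈ s, ∀ q ∈ s, p < a → p < q → p + 2 * r ≤ q)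
    (i : Option ↥(s ∩ Iio a)) {x y : ℝ} (hx : x ∈ cthickeningPiece s a δ i)
    (hy : y ∈ cthickening δ s \ cthickeningPiece s a δ i) :
    ∃ z ∈ uIcc x y, z ∉ cthickening δ s := by
  obtain ⟨hy, hyi⟩ := hy
  rcases i with _ | ⟨c, hc, hca⟩
  · have hya : y < a - δ := lt_of_not_ge fun h => hyi ⟨hy, h⟩
    exact Real.exists_mem_uIcc_notMem_cthickening (disjoint_Ioo_sub_of_sparse hsparse ha le_rfl)
      hδ (by linarith) hy (.inr ⟨by linarith, hx.2⟩)
  · rw [cthickeningPiece, Set.mem_Icc] at hx hyi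
    rcases not_and_or.1 hyi with hyc | hyc
    · exact Real.exists_mem_uIcc_notMem_cthickening
        (disjoint_Ioo_sub_of_sparse hsparse hc hca.le) hδ (by linarith) hy
        (.inr ⟨not_le.1 hyc, hx.1⟩)
    · exact Real.exists_mem_uIcc_notMem_cthickening
        (disjoint_Ioo_add_of_sparse hsparse hc hca) hδ (by linarith) hy
        (.inl ⟨hx.2, not_le.1 hyc⟩)

theorem cthickeningPiece_injective (ha : a ∈ s) (hδ : 0 ≤ δ) (hδr : δ < r)
    (hsparse : ∀ p ∈ s, ∀ q ∈ s, p < a → p < q → p + 2 * r ≤ q) :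
    (cthickeningPiece s a δ).Injective := by
  have htail : a ∈ cthickeningPiece s a δ none :=
    ⟨self_subset_cthickening s ha, sub_le_self a hδ⟩
  have hsome : ∀ c : ↥(s ∩ Iio a), a ∉ cthickeningPiece s a δ (some c) := fun ⟨c, hc, hca⟩ h =>
    by linarith [hsparse c hc a ha hca hca, h.2]
  rintro (_ | c) (_ | c') h
  · rfl
  · exact absurd (h ▸ htail) (hsome c')
  · exact absurd (h ▸ htail) (hsome c)
  · have := ((Icc_eq_Icc_iff (by linarith)).1 h).1
    exact congrArg some (Subtype.ext (by linarith))

theorem ncard_connectedComponentIn_cthickening (ha : a ∈ s) (hfin : (s ∩ Iio a).Finite)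
    (hδ : 0 ≤ δ) (hδr : δ < r) (hsparse : ∀ p ∈ s, ∀ q ∈ s, p < a → p < q → p + 2 * r ≤ q)
    (hdense : ∀ q ∈ s, Icc a q ⊆ cthickening δ s) :
    {C | ∃ x ∈ cthickening δ s, C = connectedComponentIn (cthickening δ s) x}.ncard
      = (s ∩ Iio a).ncard + 1 := by
  have : Finite ↥(s ∩ Iio a) := hfin.to_subtype
  rw [← Nat.card_coe_set_eq (s ∩ Iio a), ← Finite.card_option]
  refine ncard_connectedComponentIn_eq_card (cthickeningPiece s a δ) ?_ ?_
    (iUnion_cthickeningPiece hfin hδ)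
    (fun i x hx y hy => cthickeningPiece_separated ha hδ hδr hsparse i hx hy)
    (cthickeningPiece_injective ha hδ hδr hsparse)
  · rintro (_ | c)
    exacts [ordConnected_cthickening_inter_Ici ha hdense, ordConnected_Icc]
  · rintro (_ | c)
    exacts [⟨a, self_subset_cthickening s ha, sub_le_self a hδ⟩,
      ⟨c, sub_le_self _ hδ, le_add_of_nonneg_right hδ⟩]

end SparseBelowDenseAbove

theorem Real.exists_nat_abs_sub_le {a d z : ℝ} {N : ℕ} (hd : 0 ≤ d)
    (hz : z ∈ Icc a (a + 2 * N * d)) : ∃ j ≤ N, |z - (a + 2 * j * d)| ≤ d := by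
  induction N with
  | zero =>
    obtain ⟨h1, h2⟩ := hz
    refine ⟨0, le_rfl, abs_le.2 ⟨?_, ?_⟩⟩ <;> push_cast at h2 ⊢ <;> linarith
  | succ N ih =>
    rcases le_or_gt z (a + 2 * N * d) with h | h
    · obtain ⟨j, hj, hzj⟩ := ih ⟨hz.1, h⟩
      exact ⟨j, hj.trans N.le_succ, hzj⟩
    have h2 := hz.2
    push_cast at h2
    rcases le_or_gt z (a + (2 * N + 1) * d) with h' | h'
    · exact ⟨N, N.le_succ, abs_le.2 ⟨by linarith, by linarith⟩⟩
    · exact ⟨N + 1, le_rfl, abs_le.2 ⟨by push_cast; linarith, by push_cast; linarith⟩⟩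

section GapSet

variable {ρ : ℝ} {ℓ : ℕ}

noncomputable def gapPoint (ρ : ℝ) (ℓ κ j : ℕ) : ℝ :=
  gapX ρ ℓ κ + 2 * (j : ℝ) * ρ ^ (κ + 1)

theorem gapX_zero : gapX ρ ℓ 0 = 0 := by
  simp [gapX]

theorem gapX_succ (κ : ℕ) :
    gapX ρ ℓ (κ + 1) = gapX ρ ℓ κ + 2 * (ℓ : ℝ) ^ (κ + 1) * ρ ^ (κ + 1) :=
  Finset.sum_Icc_succ_top (Nat.le_add_left 1 κ) _

theorem gapX_monotone (hρ : 0 ≤ ρ) : Monotone (gapX ρ ℓ) :=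
  monotone_nat_of_le_succ fun κ => by
    rw [gapX_succ]
    exact le_add_of_nonneg_right (by positivity)

theorem gapX_strictMono (hρ : 0 < ρ) (hℓ : 0 < ℓ) : StrictMono (gapX ρ ℓ) :=
  strictMono_nat_of_lt_succ fun κ => by
    rw [gapX_succ]
    exact lt_add_of_pos_right _ (by positivity)

theorem gapPoint_zero (κ : ℕ) : gapPoint ρ ℓ κ 0 = gapX ρ ℓ κ := by
  simp [gapPoint]

theorem gapPoint_succ (κ j : ℕ) : gapPoint ρ ℓ κ (j + 1) = gapPoint ρ ℓ κ j + 2 * ρ ^ (κ + 1) := by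
  simp only [gapPoint]
  push_cast
  ring

theorem gapPoint_pow (κ : ℕ) : gapPoint ρ ℓ κ (ℓ ^ (κ + 1)) = gapX ρ ℓ (κ + 1) := by
  rw [gapX_succ, gapPoint]
  push_cast
  ring

theorem gapPoint_strictMono (hρ : 0 < ρ) (κ : ℕ) : StrictMono (gapPoint ρ ℓ κ) := fun i j hij => by
  simp only [gapPoint]
  gcongr

theorem gapPoint_le_gapX_succ (hρ : 0 ≤ ρ) {κ j : ℕ} (hj : j ≤ ℓ ^ (κ + 1)) :
    gapPoint ρ ℓ κ j ≤ gapX ρ ℓ (κ + 1) := by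
  rw [gapX_succ, gapPoint]
  gcongr
  exact_mod_cast hj

theorem gapPoint_mem {κ j : ℕ} (hj : j ≤ ℓ ^ (κ + 1)) : gapPoint ρ ℓ κ j ∈ gapSet ρ ℓ :=
  ⟨κ, j, hj, rfl⟩

theorem gapX_mem (κ : ℕ) : gapX ρ ℓ κ ∈ gapSet ρ ℓ :=
  gapPoint_zero (ρ := ρ) (ℓ := ℓ) κ ▸ gapPoint_mem (Nat.zero_le _)

theorem gapPoint_mem_Ico (hρ : 0 < ρ) {κ j : ℕ} (hj : j < ℓ ^ (κ + 1)) :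
    gapPoint ρ ℓ κ j ∈ Ico (gapX ρ ℓ κ) (gapX ρ ℓ (κ + 1)) :=
  ⟨gapPoint_zero (ρ := ρ) (ℓ := ℓ) κ ▸ (gapPoint_strictMono hρ κ).monotone (Nat.zero_le j),
    (gapPoint_strictMono hρ κ j.lt_succ_self).trans_le (gapPoint_le_gapX_succ hρ.le hj)⟩

theorem exists_gapPoint_eq (hℓ : 0 < ℓ) {p : ℝ} (hp : p ∈ gapSet ρ ℓ) :
    ∃ κ j, j < ℓ ^ (κ + 1) ∧ gapPoint ρ ℓ κ j = p := by
  obtain ⟨κ, j, hj, rfl⟩ := hp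
  rcases hj.lt_or_eq with hj | rfl
  · exact ⟨κ, j, hj, rfl⟩
  · exact ⟨κ + 1, 0, pow_pos hℓ _, by rw [gapPoint_zero, ← gapPoint_pow]; rfl⟩

theorem gapSet_inter_Ico (hρ : 0 < ρ) (hℓ : 0 < ℓ) (κ : ℕ) :
    gapSet ρ ℓ ∩ Ico (gapX ρ ℓ κ) (gapX ρ ℓ (κ + 1)) = gapPoint ρ ℓ κ '' Set.Iio (ℓ ^ (κ + 1)) := by
  ext p
  constructor
  · rintro ⟨hp, hpκ⟩
    obtain ⟨κ', j, hj, rfl⟩ := exists_gapPoint_eq hℓ hp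
    have hpκ' := gapPoint_mem_Ico hρ hj
    have h1 := (gapX_strictMono hρ hℓ).lt_iff_lt.1 (hpκ.1.trans_lt hpκ'.2)
    have h2 := (gapX_strictMono hρ hℓ).lt_iff_lt.1 (hpκ'.1.trans_lt hpκ.2)
    obtain rfl : κ' = κ := by omega
    exact ⟨j, hj, rfl⟩
  · rintro ⟨j, hj, rfl⟩
    exact ⟨gapPoint_mem (le_of_lt hj), gapPoint_mem_Ico hρ hj⟩

theorem encard_gapSet_inter_Iio (hρ : 0 < ρ) (hℓ : 0 < ℓ) (k : ℕ) :
    (gapSet ρ ℓ ∩ Iio (gapX ρ ℓ k)).encard = ((∑ i ∈ Finset.Icc 1 k, ℓ ^ i : ℕ) : ℕ∞) := by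
  induction k with
  | zero =>
    rw [Finset.Icc_eq_empty (by omega), Finset.sum_empty, Nat.cast_zero, encard_eq_zero,
      Set.eq_empty_iff_forall_notMem]
    rintro _ ⟨⟨κ, j, -, rfl⟩, hp⟩
    have hκ := gapX_monotone (ℓ := ℓ) hρ.le (Nat.zero_le κ)
    have hj : 0 ≤ 2 * (j : ℝ) * ρ ^ (κ + 1) := by positivity
    have hp : gapX ρ ℓ κ + 2 * (j : ℝ) * ρ ^ (κ + 1) < gapX ρ ℓ 0 := hp
    linarith
  | succ k ih =>
    have hblocks := gapX_monotone (ℓ := ℓ) hρ.le k.le_succ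
    have hdisj : Disjoint (Iio (gapX ρ ℓ k)) (Ico (gapX ρ ℓ k) (gapX ρ ℓ (k + 1))) :=
      (Iio_disjoint_Ici le_rfl).mono_right Ico_subset_Ici_self
    rw [← Iio_union_Ico_eq_Iio hblocks, Set.inter_union_distrib_left,
      encard_union_eq (hdisj.mono Set.inter_subset_right Set.inter_subset_right), ih,
      gapSet_inter_Ico hρ hℓ, (gapPoint_strictMono hρ k).injective.injOn.encard_image,
      ← Finset.coe_range, encard_coe_eq_coe_finsetCard, Finset.card_range,
      Finset.sum_Icc_succ_top (by omega), Nat.cast_add]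

theorem gapSet_add_two_pow_le (hρ0 : 0 < ρ) (hρ1 : ρ ≤ 1) (hℓ : 0 < ℓ) {k : ℕ} {p q : ℝ}
    (hp : p ∈ gapSet ρ ℓ) (hq : q ∈ gapSet ρ ℓ) (hpk : p < gapX ρ ℓ k) (hpq : p < q) :
    p + 2 * ρ ^ k ≤ q := by
  obtain ⟨κ, j, hj, rfl⟩ := exists_gapPoint_eq hℓ hp
  have hpκ := gapPoint_mem_Ico hρ0 hj
  have hκ : κ < k := (gapX_strictMono hρ0 hℓ).lt_iff_lt.1 (hpκ.1.trans_lt hpk)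
  have hnext : gapPoint ρ ℓ κ (j + 1) ≤ q := by
    rcases lt_or_ge q (gapX ρ ℓ (κ + 1)) with hqκ | hqκ
    · obtain ⟨j', -, rfl⟩ := (gapSet_inter_Ico hρ0 hℓ κ).subset ⟨hq, hpκ.1.trans hpq.le, hqκ⟩
      exact (gapPoint_strictMono hρ0 κ).monotone ((gapPoint_strictMono hρ0 κ).lt_iff_lt.1 hpq)
    · exact (gapPoint_le_gapX_succ hρ0.le hj).trans hqκ
  calc gapPoint ρ ℓ κ j + 2 * ρ ^ k ≤ gapPoint ρ ℓ κ j + 2 * ρ ^ (κ + 1) := by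
        linarith [pow_le_pow_of_le_one (m := κ + 1) hρ0.le hρ1 hκ]
    _ = gapPoint ρ ℓ κ (j + 1) := (gapPoint_succ κ j).symm
    _ ≤ q := hnext

theorem Icc_gapX_subset_cthickening (hρ : 0 ≤ ρ) (κ : ℕ) :
    Icc (gapX ρ ℓ κ) (gapX ρ ℓ (κ + 1)) ⊆ cthickening (ρ ^ (κ + 1)) (gapSet ρ ℓ) := by
  intro z hz
  rw [gapX_succ] at hz
  obtain ⟨j, hj, hzj⟩ := Real.exists_nat_abs_sub_le (N := ℓ ^ (κ + 1)) (pow_nonneg hρ _)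
    (by push_cast; exact hz)
  exact mem_cthickening_of_dist_le z _ _ _ (gapPoint_mem hj) (by rwa [Real.dist_eq, gapPoint])

theorem Icc_gapX_add_subset_cthickening (hρ0 : 0 ≤ ρ) (hρ1 : ρ ≤ 1) (k n : ℕ) :
    Icc (gapX ρ ℓ k) (gapX ρ ℓ (k + n)) ⊆ cthickening (ρ ^ (k + 1)) (gapSet ρ ℓ) := by
  induction n with
  | zero =>
    rw [add_zero, Set.Icc_self, Set.singleton_subset_iff]
    exact self_subset_cthickening _ (gapX_mem k)
  | succ n ih =>
    rw [← add_assoc, ← Icc_union_Icc_eq_Icc (gapX_monotone hρ0 (Nat.le_add_right k n))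
      (gapX_monotone hρ0 (k + n).le_succ)]
    exact union_subset ih ((Icc_gapX_subset_cthickening hρ0 (k + n)).trans
      (cthickening_mono (pow_le_pow_of_le_one hρ0 hρ1 (by omega)) _))

theorem Icc_gapX_subset_cthickening_of_mem (hρ0 : 0 ≤ ρ) (hρ1 : ρ ≤ 1) (k : ℕ) {q : ℝ}
    (hq : q ∈ gapSet ρ ℓ) : Icc (gapX ρ ℓ k) q ⊆ cthickening (ρ ^ (k + 1)) (gapSet ρ ℓ) := by
  obtain ⟨κ, j, hj, rfl⟩ := hq
  refine (Set.Icc_subset_Icc_right ?_).trans (Icc_gapX_add_subset_cthickening hρ0 hρ1 k (κ + 1))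
  exact (gapPoint_le_gapX_succ hρ0 hj).trans (gapX_monotone hρ0 (by omega))

end GapSet

theorem gapSet_cthickening_component_count_general
    (ρ : ℝ) (hρ : ρ ∈ Set.Ioo (0 : ℝ) 1) (ℓ : ℕ) (hℓ : 2 ≤ ℓ)
    (k : ℕ) (ε : ℝ) (hε1 : ρ ^ (k + 1) ≤ ε) (hε2 : ε < ρ ^ k) :
    {C : Set ℝ | ∃ p ∈ Metric.cthickening ε (gapSet ρ ℓ),
        C = connectedComponentIn (Metric.cthickening ε (gapSet ρ ℓ)) p}.ncard
      = 1 + ∑ j ∈ Finset.Icc 1 k, ℓ ^ j := by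
  obtain ⟨hρ0, hρ1⟩ := hρ
  have hℓ0 : 0 < ℓ := by omega
  have hcard := encard_gapSet_inter_Iio hρ0 hℓ0 k
  have hfin := finite_of_encard_eq_coe hcard
  rw [add_comm, ncard_connectedComponentIn_cthickening (gapX_mem k) hfin
    ((pow_nonneg hρ0.le _).trans hε1) hε2
    (fun p hp q hq => gapSet_add_two_pow_le hρ0 hρ1.le hℓ0 hp hq)
    (fun q hq => (Icc_gapX_subset_cthickening_of_mem hρ0.le hρ1.le k hq).trans
      (cthickening_mono hε1 _))]
  congr 1
  exact_mod_cast hfin.cast_ncard_eq.trans hcard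

/-- For every integer `k ≥ 1`, if `ρ^{k+1} ≤ ε < ρ^k`, then the
closed `ε`-neighborhood `S_ε` has exactly `1 + Σ_{j=1}^{k} ℓ^j` connected
components. -/
theorem gapSet_cthickening_component_count
    (ρ : ℝ) (hρ : ρ ∈ Set.Ioo (0 : ℝ) 1) (ℓ : ℕ) (hℓ : 2 ≤ ℓ)
    (k : ℕ) (hk : 1 ≤ k) (ε : ℝ) (hε1 : ρ ^ (k + 1) ≤ ε) (hε2 : ε < ρ ^ k) :
    {C : Set ℝ | ∃ p ∈ Metric.cthickening ε (gapSet ρ ℓ),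
        C = connectedComponentIn (Metric.cthickening ε (gapSet ρ ℓ)) p}.ncard
      = 1 + ∑ j ∈ Finset.Icc 1 k, ℓ ^ j :=
  gapSet_cthickening_component_count_general ρ hρ ℓ hℓ k ε hε1 hε2
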